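/- Let (R, m) be a Noetherian local ring, let a_{•,0} and a_{•,1} be m-filtrations on R, and let (a_{•,t})_{t∈[0,1]} be the geodesic between them. Fix 0 ≤ t < t' ≤ 1 and λ > 0, and set b := a_{λ,0} ∩ a_{λ,t}, b' := a_{λ,0} ∩ a_{λ,t'}, and c := a_{λ,t} ∩ a_{λ,t'}. Then b' ⊆ b, b' ⊆ c, and there is an isomorphism of R-modules a_{λ,t}/b ≅ c/b'. -/

import Mathlib

open IsLocalRing

variable {R : Type*} [CommRing R] [IsNoetherianRing R] [IsLocalRing R]

/-- An ideal is `m`-primary: proper with radical the maximal ideal. -/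
def IsPrimaryToMax (R : Type*) [CommRing R] [IsLocalRing R] (I : Ideal R) : Prop :=
  I ≠ ⊤ ∧ I.radical = maximalIdeal R

/-- An `m`-filtration on a Noetherian local ring `(R, m)`: a family of `m`-primary ideals
indexed by `ℝ` (only the values at `λ > 0` matter, with the convention `a 0 = R`),
decreasing, left-continuous and multiplicative. -/
structure IsMFiltration (R : Type*) [CommRing R] [IsLocalRing R] (a : ℝ → Ideal R) : Prop where
  primary : ∀ lam : ℝ, 0 < lam → IsPrimaryToMax R (a lam)
  antitone : ∀ lam mu : ℝ, 0 < mu → mu < lam → a lam ≤ a mu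
  left_cont : ∀ lam : ℝ, 0 < lam → ∃ ε > (0 : ℝ), ∀ ε' : ℝ, 0 < ε' → ε' ≤ ε →
    a (lam - ε') = a lam
  mul : ∀ lam mu : ℝ, 0 < lam → 0 < mu → a lam * a mu ≤ a (lam + mu)
  zero : a 0 = ⊤

/-- The geodesic between two `m`-filtrations `a₀` and `a₁` at time `t`:
`a_{λ,t} = Σ_{μ,ν ≥ 0, (1−t)μ + tν = λ} (a₀_μ ∩ a₁_ν)` (sum of ideals, i.e. supremum
over all such pairs `(μ, ν)` of nonnegative reals). -/
noncomputable def geodesic {R : Type*} [CommRing R] (a₀ a₁ : ℝ → Ideal R)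
    (t lam : ℝ) : Ideal R :=
  ⨆ (p : ℝ × ℝ) (_ : 0 ≤ p.1 ∧ 0 ≤ p.2 ∧ (1 - t) * p.1 + t * p.2 = lam),
    (a₀ p.1 ⊓ a₁ p.2)

/-!
Write `I = a_{λ,0}`, `A = a_{λ,t}`, `A' = a_{λ,t'}`. Since a filtration is
antitone, `a_{λ,t}` contains `a_{μ,0} ∩ a_{ν,1}` as soon as `(μ, ν)` lies on or above the line
`(1-t)μ + tν = λ` (scale `(μ, ν)` down onto it). A generator of `A'` with `μ ≥ λ` satisfies
`ν ≤ μ`, so it lies above the line of time `t`; one with `μ < λ` has `ν > λ` and lies in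
`a_{λ,1}`. As `I ∩ a_{λ,1} ⊆ A`, modularity of the ideal lattice gives `I ∩ A' ⊆ A`.
Symmetrically every generator of `A` lies in `I` or in `A ∩ A'`, so `A ⊆ (A ∩ A') + I`.
Both `A/(A ∩ I)` and `(A ∩ A')/(A ∩ A' ∩ I)` are then `(A + I)/I` by the second isomorphism
theorem, and `A ∩ A' ∩ I = I ∩ A'`.
-/

section

variable {R : Type*} [CommRing R]

theorem IsMFiltration.antitoneOn [IsLocalRing R] {a : ℝ → Ideal R} (h : IsMFiltration R a) :
    AntitoneOn a (Set.Ici 0) := by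
  intro x (hx : 0 ≤ x) y _ hxy
  rcases hx.eq_or_lt with rfl | hx
  · exact h.zero ▸ le_top
  · rcases hxy.eq_or_lt with rfl | hxy
    · exact le_rfl
    · exact h.antitone y x hx hxy

theorem exists_le_le_comb_eq_of_le {s μ ν lam : ℝ} (hμ : 0 ≤ μ) (hν : 0 ≤ ν) (hlam : 0 ≤ lam)
    (h : lam ≤ (1 - s) * μ + s * ν) :
    ∃ μ' ν', 0 ≤ μ' ∧ μ' ≤ μ ∧ 0 ≤ ν' ∧ ν' ≤ ν ∧ (1 - s) * μ' + s * ν' = lam := by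
  set D := (1 - s) * μ + s * ν
  rcases (hlam.trans h).eq_or_lt with hD | hD
  · exact ⟨0, 0, le_rfl, hμ, le_rfl, hν, by linarith⟩
  have hc₀ : 0 ≤ lam / D := div_nonneg hlam hD.le
  have hc₁ : lam / D ≤ 1 := (div_le_one hD).2 h
  refine ⟨lam / D * μ, lam / D * ν, by positivity, mul_le_of_le_one_left hμ hc₁,
    by positivity, mul_le_of_le_one_left hν hc₁, ?_⟩
  field_simp
  ring

theorem inf_le_of_le_sup_of_inf_le {α : Type*} [Lattice α] [IsModularLattice α]
    {I J X Y : α} (hX : X ≤ I ⊓ Y ⊔ J) (hJ : I ⊓ J ≤ Y) : I ⊓ X ≤ Y :=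
  calc I ⊓ X ≤ (I ⊓ Y ⊔ J) ⊓ I := by rw [inf_comm]; exact inf_le_inf_right I hX
    _ = I ⊓ Y ⊔ J ⊓ I := sup_inf_assoc_of_le J inf_le_left
    _ ≤ Y := sup_le inf_le_right (inf_comm J I ▸ hJ)

section Geodesic

variable {a₀ a₁ : ℝ → Ideal R}

theorem le_geodesic {t lam μ ν : ℝ} (hμ : 0 ≤ μ) (hν : 0 ≤ ν)
    (h : (1 - t) * μ + t * ν = lam) : a₀ μ ⊓ a₁ ν ≤ geodesic a₀ a₁ t lam :=
  le_iSup_of_le (μ, ν) (le_iSup_of_le ⟨hμ, hν, h⟩ le_rfl)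

theorem geodesic_le {t lam : ℝ} {J : Ideal R}
    (h : ∀ μ ν, 0 ≤ μ → 0 ≤ ν → (1 - t) * μ + t * ν = lam → a₀ μ ⊓ a₁ ν ≤ J) :
    geodesic a₀ a₁ t lam ≤ J :=
  iSup_le fun p => iSup_le fun ⟨hμ, hν, heq⟩ => h p.1 p.2 hμ hν heq

theorem le_geodesic_of_le (h₀ : AntitoneOn a₀ (Set.Ici 0)) (h₁ : AntitoneOn a₁ (Set.Ici 0))
    {t lam μ ν : ℝ} (hlam : 0 ≤ lam) (hμ : 0 ≤ μ) (hν : 0 ≤ ν)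
    (h : lam ≤ (1 - t) * μ + t * ν) : a₀ μ ⊓ a₁ ν ≤ geodesic a₀ a₁ t lam := by
  obtain ⟨μ', ν', hμ'₀, hμ', hν'₀, hν', heq⟩ := exists_le_le_comb_eq_of_le hμ hν hlam h
  exact (inf_le_inf (h₀ hμ'₀ hμ hμ') (h₁ hν'₀ hν hν')).trans (le_geodesic hμ'₀ hν'₀ heq)

variable (h₀ : AntitoneOn a₀ (Set.Ici 0)) (h₁ : AntitoneOn a₁ (Set.Ici 0))
  {t t' lam : ℝ} (ht : 0 ≤ t) (htt' : t ≤ t') (hlam : 0 ≤ lam)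
include h₀ h₁ ht htt' hlam

theorem inf_geodesic_le_geodesic (ht'₀ : 0 < t') (ht' : t' ≤ 1) :
    a₀ lam ⊓ geodesic a₀ a₁ t' lam ≤ geodesic a₀ a₁ t lam := by
  refine inf_le_of_le_sup_of_inf_le (J := a₁ lam) (geodesic_le fun μ ν hμ hν heq => ?_)
    (le_geodesic_of_le h₀ h₁ hlam hlam hlam (by linarith))
  rcases le_or_gt lam μ with hμlam | hμlam
  · refine le_sup_of_le_left (le_inf (inf_le_left.trans (h₀ hlam hμ hμlam)) ?_)
    exact le_geodesic_of_le h₀ h₁ hlam hμ hν (by nlinarith)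
  · have hνlam : lam ≤ ν := by nlinarith
    exact le_sup_of_le_right (inf_le_right.trans (h₁ hlam hν hνlam))

theorem geodesic_le_inf_geodesic_sup :
    geodesic a₀ a₁ t lam ≤ geodesic a₀ a₁ t lam ⊓ geodesic a₀ a₁ t' lam ⊔ a₀ lam := by
  refine geodesic_le fun μ ν hμ hν heq => ?_
  rcases le_or_gt lam μ with hμlam | hμlam
  · exact le_sup_of_le_right (inf_le_left.trans (h₀ hlam hμ hμlam))
  · have hμν : μ ≤ ν := by nlinarith
    exact le_sup_of_le_left (le_inf (le_geodesic hμ hν heq)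
      (le_geodesic_of_le h₀ h₁ hlam hμ hν (by nlinarith)))

end Geodesic

theorem Submodule.nonempty_quotient_inf_equiv_of_le_sup {M : Type*} [AddCommGroup M]
    [Module R M] {N N' P : Submodule R M} (hN' : N' ≤ N) (hN : N ≤ N' ⊔ P) :
    Nonempty ((N ⧸ comap N.subtype (N ⊓ P)) ≃ₗ[R] (N' ⧸ comap N'.subtype (N' ⊓ P))) := by
  have e := LinearMap.quotientInfEquivSupQuotient N' P
  rw [show N' ⊔ P = N ⊔ P from le_antisymm (sup_le_sup_right hN' P) (sup_le hN le_sup_right)]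
    at e
  exact ⟨(LinearMap.quotientInfEquivSupQuotient N P).trans e.symm⟩

end

/-- Along the geodesic between `m`-filtrations `a₀` and `a₁`, with `0 ≤ t < t' ≤ 1` and
`λ > 0`, setting `b = a_{λ,0} ∩ a_{λ,t}`, `b' = a_{λ,0} ∩ a_{λ,t'}` and
`c = a_{λ,t} ∩ a_{λ,t'}`, one has `b' ⊆ b`, `b' ⊆ c`, and an isomorphism of `R`-modules
`a_{λ,t}/b ≅ c/b'`. -/
theorem geodesic_parallelogram (a₀ a₁ : ℝ → Ideal R)
    (h₀ : IsMFiltration R a₀) (h₁ : IsMFiltration R a₁)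
    (t t' : ℝ) (ht : 0 ≤ t) (htt' : t < t') (ht' : t' ≤ 1)
    (lam : ℝ) (hlam : 0 < lam) :
    a₀ lam ⊓ geodesic a₀ a₁ t' lam ≤ a₀ lam ⊓ geodesic a₀ a₁ t lam ∧
    a₀ lam ⊓ geodesic a₀ a₁ t' lam ≤ geodesic a₀ a₁ t lam ⊓ geodesic a₀ a₁ t' lam ∧
    Nonempty
      ((↥(geodesic a₀ a₁ t lam) ⧸
          Submodule.comap (geodesic a₀ a₁ t lam).subtype
            (a₀ lam ⊓ geodesic a₀ a₁ t lam)) ≃ₗ[R]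
        (↥(geodesic a₀ a₁ t lam ⊓ geodesic a₀ a₁ t' lam) ⧸
          Submodule.comap (geodesic a₀ a₁ t lam ⊓ geodesic a₀ a₁ t' lam).subtype
            (a₀ lam ⊓ geodesic a₀ a₁ t' lam))) := by
  have hb'A : a₀ lam ⊓ geodesic a₀ a₁ t' lam ≤ geodesic a₀ a₁ t lam :=
    inf_geodesic_le_geodesic h₀.antitoneOn h₁.antitoneOn ht htt'.le hlam.le
      (ht.trans_lt htt') ht'
  have hA := geodesic_le_inf_geodesic_sup h₀.antitoneOn h₁.antitoneOn ht htt'.le hlam.le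
  have hb' : a₀ lam ⊓ geodesic a₀ a₁ t' lam =
      geodesic a₀ a₁ t lam ⊓ geodesic a₀ a₁ t' lam ⊓ a₀ lam :=
    le_antisymm (le_inf (le_inf hb'A inf_le_right) inf_le_left)
      (le_inf inf_le_right (inf_le_left.trans inf_le_right))
  refine ⟨le_inf inf_le_left hb'A, le_inf hb'A inf_le_right, ?_⟩
  rw [inf_comm (a₀ lam) (geodesic a₀ a₁ t lam), hb']
  exact Submodule.nonempty_quotient_inf_equiv_of_le_sup inf_le_left hA
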